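/- arXiv:2007.04024 — 3 statements merged into one kernel-verified Lean document; each statement's English description precedes it below -/
import Mathlib

section
/- In the ring TrivSqZeroExt ℤ (ℕ →₀ ℤ), for all natural numbers v, h, all n ≥ 1 and all finitely supported r, k : ℕ →₀ ℤ, setting a = inl((−1)^v) + inr((−1)^{v+1} • r) and b = inl((−1)^h) + inr((−1)^{h+1} • k), one has a^n · (b^n − 1) = inl( (−1)^{n·v}·((−1)^{n·h} − 1) ) + inr( ((−1)^{n·(v+h)}·n) • ( (−1)^{n·h} • r − r − k ) ). In particular every coordinate l of the second component equals (−1)^{n(v+h)}·n·((−1)^{nh}·r(l) − r(l) − k(l)). -/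
/-!
Both degrees factor as a sign times a unipotent element, `a = inl α * (1 - inr r)` with
`α = ±1`. Since `inr` has square zero, `(1 - inr r) ^ n = 1 - inr (n • r)`, so `a ^ n` and
`b ^ n` are again of this shape, and the product is expanded directly, using `σ * σ = 1` for
the sign `σ = (-1) ^ (n * h)`.
-/

open TrivSqZeroExt

namespace TrivSqZeroExt

variable {R M : Type*} [CommRing R] [AddCommGroup M] [Module R M] [Module Rᵐᵒᵖ M]
  [IsCentralScalar R M]

theorem one_sub_inr_pow (x : M) (n : ℕ) :
    (1 - inr x : TrivSqZeroExt R M) ^ n = 1 - inr (n • x) := by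
  ext
  · simp [fst_pow]
  · simp [snd_pow, Nat.cast_smul_eq_nsmul]

theorem inl_add_inr_neg_smul (c : R) (x : M) :
    (inl c + inr (-(c • x)) : TrivSqZeroExt R M) = inl c * (1 - inr x) := by
  rw [mul_sub, mul_one, inl_mul_inr, inr_neg]
  abel

theorem inl_mul_one_sub_inr_mul_sub_one (τ σ : R) (hσ : σ * σ = 1) (x y : M) :
    (inl τ * (1 - inr x) : TrivSqZeroExt R M) * (inl σ * (1 - inr y) - 1) =
      inl (τ * (σ - 1)) + inr ((τ * σ) • (σ • x - x - y)) := by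
  ext
  · simp
  · simp only [snd_mul, fst_mul, snd_sub, fst_sub, snd_add, snd_inl, fst_inl, snd_inr, fst_inr,
      snd_one, fst_one, op_smul_eq_smul, sub_zero, zero_sub, mul_one, smul_zero, add_zero,
      zero_add]
    linear_combination (norm := module) hσ • -(τ • x)

end TrivSqZeroExt

theorem stmt_6_general (v h n : ℕ) (r k : ℕ →₀ ℤ)
    (a b : TrivSqZeroExt ℤ (ℕ →₀ ℤ))
    (ha : a = inl ((-1 : ℤ) ^ v) + inr (((-1 : ℤ) ^ (v + 1)) • r))
    (hb : b = inl ((-1 : ℤ) ^ h) + inr (((-1 : ℤ) ^ (h + 1)) • k)) :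
    (a ^ n * (b ^ n - 1) =
      inl ((-1 : ℤ) ^ (n * v) * ((-1 : ℤ) ^ (n * h) - 1)) +
        inr ((((-1 : ℤ) ^ (n * (v + h)) * (n : ℤ)) •
          (((-1 : ℤ) ^ (n * h)) • r - r - k)))) ∧
    ∀ l : ℕ,
      (snd (a ^ n * (b ^ n - 1)) : ℕ →₀ ℤ) l =
        (-1 : ℤ) ^ (n * (v + h)) * (n : ℤ) *
          ((-1 : ℤ) ^ (n * h) * r l - r l - k l) := by
  have degree_pow : ∀ (w : ℕ) (x : ℕ →₀ ℤ),
      (inl ((-1 : ℤ) ^ w) + inr (((-1 : ℤ) ^ (w + 1)) • x) : TrivSqZeroExt ℤ (ℕ →₀ ℤ)) ^ n =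
        inl ((-1 : ℤ) ^ (n * w)) * (1 - inr ((n : ℤ) • x)) := by
    intro w x
    rw [pow_succ', neg_one_mul, neg_smul, inl_add_inr_neg_smul, mul_pow, inl_pow,
      one_sub_inr_pow, ← pow_mul, mul_comm w, natCast_zsmul]
  have sign_sq : (-1 : ℤ) ^ (n * h) * (-1) ^ (n * h) = 1 := by
    rw [← pow_add, ← two_mul, pow_mul, neg_one_sq, one_pow]
  have key : a ^ n * (b ^ n - 1) =
      inl ((-1 : ℤ) ^ (n * v) * ((-1 : ℤ) ^ (n * h) - 1)) +
        inr ((((-1 : ℤ) ^ (n * (v + h)) * (n : ℤ)) •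
          (((-1 : ℤ) ^ (n * h)) • r - r - k))) := by
    rw [ha, hb, degree_pow, degree_pow, inl_mul_one_sub_inr_mul_sub_one _ _ sign_sq, ← pow_add,
      ← mul_add]
    congr 2
    module
  refine ⟨key, fun l => ?_⟩
  simp [key]

/-- In `U(SO(2)) = TrivSqZeroExt ℤ (ℕ →₀ ℤ)`, for all `v h : ℕ`, `n ≥ 1` and
`r k : ℕ →₀ ℤ`, with `a = inl ((-1)^v) + inr ((-1)^{v+1} • r)` and
`b = inl ((-1)^h) + inr ((-1)^{h+1} • k)` (the degrees of `-Id` on `B(V(m-1))`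
and `B(H^N_m)`), one has
`a^n * (b^n - 1) = inl ((-1)^{nv}·((-1)^{nh} - 1))
  + inr (((-1)^{n(v+h)}·n) • ((-1)^{nh} • r - r - k))`;
in particular every coordinate `l` of the second component equals
`(-1)^{n(v+h)}·n·((-1)^{nh}·r l - r l - k l)`. -/
theorem stmt_6 (v h n : ℕ) (hn : 1 ≤ n) (r k : ℕ →₀ ℤ)
    (a b : TrivSqZeroExt ℤ (ℕ →₀ ℤ))
    (ha : a = inl ((-1 : ℤ) ^ v) + inr (((-1 : ℤ) ^ (v + 1)) • r))
    (hb : b = inl ((-1 : ℤ) ^ h) + inr (((-1 : ℤ) ^ (h + 1)) • k)) :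
    (a ^ n * (b ^ n - 1) =
      inl ((-1 : ℤ) ^ (n * v) * ((-1 : ℤ) ^ (n * h) - 1)) +
        inr ((((-1 : ℤ) ^ (n * (v + h)) * (n : ℤ)) •
          (((-1 : ℤ) ^ (n * h)) • r - r - k)))) ∧
    ∀ l : ℕ,
      (snd (a ^ n * (b ^ n - 1)) : ℕ →₀ ℤ) l =
        (-1 : ℤ) ^ (n * (v + h)) * (n : ℤ) *
          ((-1 : ℤ) ^ (n * h) * r l - r l - k l) :=
  stmt_6_general v h n r k a b ha hb
end

section
/- In the ring TrivSqZeroExt ℤ (ℕ →₀ ℤ), for all natural numbers v, h, all n ≥ 1, all finitely supported r, k : ℕ →₀ ℤ, and any index l ∈ ℕ with r(l) = 0 and k(l) = 1, setting a = inl((−1)^v) + inr((−1)^{v+1} • r) and b = inl((−1)^h) + inr((−1)^{h+1} • k), the l-th coordinate of the second component of a^n · (b^n − 1) equals (−1)^{n(v+h)+1}·n; in particular it is nonzero, so a^n · (b^n − 1) ≠ 0. -/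
/-! Expanding `(x + ε m)^n = x^n + n x^(n-1) ε m` gives the `ε`-part of `a^n (b^n - 1)` as
`n a₀^n b₀^(n-1) b₁ + n (b₀^n - 1) a₀^(n-1) a₁`. At the coordinate `l` the second summand
vanishes because `r l = 0`, and the first is `±n ≠ 0` because `k l = 1`. -/

open TrivSqZeroExt

namespace TrivSqZeroExt

variable {R M : Type*} [CommRing R] [AddCommGroup M] [Module R M] [Module Rᵐᵒᵖ M]
  [IsCentralScalar R M]

theorem snd_pow_mul_pow_sub_one (a b : TrivSqZeroExt R M) (n : ℕ) :
    snd (a ^ n * (b ^ n - 1)) =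
      (n * a.fst ^ n * b.fst ^ (n - 1)) • b.snd +
        (n * (b.fst ^ n - 1) * a.fst ^ (n - 1)) • a.snd := by
  rw [snd_mul, op_smul_eq_smul, snd_sub, snd_one, sub_zero, fst_sub, fst_one, fst_pow, fst_pow,
    snd_pow, snd_pow, Nat.pred_eq_sub_one]
  module

end TrivSqZeroExt

theorem neg_one_pow_mul_neg_one_pow_sub_one {R : Type*} [Monoid R] [HasDistribNeg R]
    (v h n : ℕ) (hn : 1 ≤ n) :
    (-1 : R) ^ (v * n) * (-1) ^ (h * (n - 1)) * (-1) ^ (h + 1) = (-1) ^ (n * (v + h) + 1) := by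
  obtain ⟨m, rfl⟩ := Nat.exists_eq_add_of_le' hn
  rw [← pow_add, ← pow_add, Nat.add_sub_cancel]
  congr 1
  ring

/-- In `U(SO(2)) = TrivSqZeroExt ℤ (ℕ →₀ ℤ)`, for all `v h : ℕ`, `n ≥ 1`,
`r k : ℕ →₀ ℤ` and any index `l` with `r l = 0` and `k l = 1`, setting
`a = inl ((-1)^v) + inr ((-1)^{v+1} • r)` and
`b = inl ((-1)^h) + inr ((-1)^{h+1} • k)`, the `l`-th coordinate of the second
component of `a^n * (b^n - 1)` equals `(-1)^{n(v+h)+1}·n`; in particular it is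
nonzero, so `a^n * (b^n - 1) ≠ 0`. -/
theorem stmt_7 (v h n : ℕ) (hn : 1 ≤ n) (r k : ℕ →₀ ℤ) (l : ℕ)
    (hr : r l = 0) (hk : k l = 1)
    (a b : TrivSqZeroExt ℤ (ℕ →₀ ℤ))
    (ha : a = inl ((-1 : ℤ) ^ v) + inr (((-1 : ℤ) ^ (v + 1)) • r))
    (hb : b = inl ((-1 : ℤ) ^ h) + inr (((-1 : ℤ) ^ (h + 1)) • k)) :
    ((snd (a ^ n * (b ^ n - 1)) : ℕ →₀ ℤ) l = (-1 : ℤ) ^ (n * (v + h) + 1) * n) ∧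
    ((snd (a ^ n * (b ^ n - 1)) : ℕ →₀ ℤ) l ≠ 0) ∧
    a ^ n * (b ^ n - 1) ≠ 0 := by
  have hcoord : (snd (a ^ n * (b ^ n - 1)) : ℕ →₀ ℤ) l = (-1 : ℤ) ^ (n * (v + h) + 1) * n := by
    subst ha hb
    simp only [snd_pow_mul_pow_sub_one, Finsupp.add_apply, Finsupp.smul_apply, fst_add, snd_add,
      fst_inl, snd_inl, fst_inr, snd_inr, hr, hk, smul_eq_mul, add_zero, zero_add, mul_zero, mul_one]
    rw [← neg_one_pow_mul_neg_one_pow_sub_one v h n hn, ← pow_mul]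
    ring
  have hne : (snd (a ^ n * (b ^ n - 1)) : ℕ →₀ ℤ) l ≠ 0 := by
    rw [hcoord]
    exact mul_ne_zero (pow_ne_zero _ (by norm_num)) (Nat.cast_ne_zero.mpr (by omega))
  exact ⟨hcoord, hne, fun hzero => hne (by rw [hzero, snd_zero, Finsupp.zero_apply])⟩
end

section
/- Let n₋ ≥ 1 and n₊ ≥ 1 be integers, let d be a nonnegative integer, and let α, α' ∈ {0, 1, 2} with (α, α') ≠ (0, 0). Assume that either n₋ and n₊ have the same parity, or both n₋ ≠ 2·n₊ and n₊ ≠ 2·n₋. Then α·n₋·(−1)^{n₋·d + 1} + α'·n₊·(−1)^{n₊·d + 1} ≠ 0. -/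
/-! If the two signs `(-1)^(n₋ d + 1)` and `(-1)^(n₊ d + 1)` agree, the expression is `±(α n₋ + α' n₊)`,
which is nonzero because `α` or `α'` is positive. They can only differ when `n₋ ≢ n₊ (mod 2)`,
and then the expression vanishes iff `α n₋ = α' n₊`; with `α, α' ∈ {0, 1, 2}` this forces
`n₋ = n₊`, `n₋ = 2 n₊` or `n₊ = 2 n₋`, all excluded. -/

lemma neg_one_pow_mul_eq_of_mod_two_eq {m n : ℕ} (hmn : m % 2 = n % 2) (d : ℕ) :
    (-1 : ℤ) ^ (m * d) = (-1) ^ (n * d) := by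
  rw [neg_one_pow_eq_pow_mod_two, Nat.mul_mod, hmn, ← Nat.mul_mod, ← neg_one_pow_eq_pow_mod_two]

lemma mul_add_mul_ne_zero_of_pos {α α' m n : ℕ} (hne : ¬(α = 0 ∧ α' = 0)) (hm : 0 < m)
    (hn : 0 < n) : α * m + α' * n ≠ 0 := by
  intro h
  exact hne ⟨(Nat.mul_eq_zero.mp (Nat.eq_zero_of_add_eq_zero_right h)).resolve_right hm.ne',
    (Nat.mul_eq_zero.mp (Nat.eq_zero_of_add_eq_zero_left h)).resolve_right hn.ne'⟩

lemma eq_or_eq_two_mul_of_mul_eq_mul {α α' m n : ℕ} (hα : α = 0 ∨ α = 1 ∨ α = 2)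
    (hα' : α' = 0 ∨ α' = 1 ∨ α' = 2) (hne : ¬(α = 0 ∧ α' = 0)) (hm : 0 < m) (hn : 0 < n)
    (h : α * m = α' * n) : m = n ∨ m = 2 * n ∨ n = 2 * m := by
  rcases hα with rfl | rfl | rfl <;> rcases hα' with rfl | rfl | rfl <;> omega

/-- Let `n₋ ≥ 1` and `n₊ ≥ 1` be integers, `d` a nonnegative integer, and
`α, α' ∈ {0, 1, 2}` with `(α, α') ≠ (0, 0)`. Assume either `n₋` and `n₊` have
the same parity, or both `n₋ ≠ 2·n₊` and `n₊ ≠ 2·n₋`. Then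
`α·n₋·(-1)^{n₋·d + 1} + α'·n₊·(-1)^{n₊·d + 1} ≠ 0`. -/
theorem stmt_9 (nminus nplus d : ℕ) (hminus : 1 ≤ nminus) (hplus : 1 ≤ nplus)
    (α α' : ℕ) (hα : α = 0 ∨ α = 1 ∨ α = 2) (hα' : α' = 0 ∨ α' = 1 ∨ α' = 2)
    (hne : ¬(α = 0 ∧ α' = 0))
    (hcond : nminus % 2 = nplus % 2 ∨ (nminus ≠ 2 * nplus ∧ nplus ≠ 2 * nminus)) :
    (α : ℤ) * (nminus : ℤ) * (-1 : ℤ) ^ (nminus * d + 1) +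
      (α' : ℤ) * (nplus : ℤ) * (-1 : ℤ) ^ (nplus * d + 1) ≠ 0 := by
  set s := (-1 : ℤ) ^ (nminus * d + 1)
  set t := (-1 : ℤ) ^ (nplus * d + 1)
  have hs_ne : s ≠ 0 := pow_ne_zero _ (by norm_num)
  by_cases hst : s = t
  · rw [← hst, ← add_mul]
    exact mul_ne_zero (by exact_mod_cast mul_add_mul_ne_zero_of_pos hne hminus hplus) hs_ne
  · have hparity : nminus % 2 ≠ nplus % 2 := fun h =>
      hst (by simp only [s, t, pow_succ, neg_one_pow_mul_eq_of_mod_two_eq h d])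
    have ht : t = -s := by
      rcases neg_one_pow_eq_or ℤ (nminus * d + 1) with hs | hs <;>
        rcases neg_one_pow_eq_or ℤ (nplus * d + 1) with ht | ht <;> simp_all [s, t]
    obtain ⟨hnot_double, hnot_half⟩ := hcond.resolve_left hparity
    rw [ht, mul_neg, ← sub_eq_add_neg, ← sub_mul]
    refine mul_ne_zero (sub_ne_zero.mpr fun h => ?_) hs_ne
    rcases eq_or_eq_two_mul_of_mul_eq_mul hα hα' hne hminus hplus (by exact_mod_cast h) with
      h | h | h
    · exact hparity (h ▸ rfl)
    · exact hnot_double h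
    · exact hnot_half h
end
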